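/- Let A be an associative unital ℝ-algebra, n a real number, and d, δ, x, y, Δ, Q, N, F elements of A satisfying x·x = 0, d·x + x·d = 0, x·y + y·x = Q, Q·d − d·Q = −2x, Δ·x − x·Δ = −2d, N·x − x·N = x, d·y + y·d = N + F, and δ·x + x·δ = F − N − (n+2)·1. Define ιD := −δ·(n·1 + 2N − 2·1) + y·Δ. Let M be a module over A, let ℓ and k be real numbers, and let U ∈ M satisfy N·U = (ℓ − n/2)•U and F·U = k•U. If there exist V, W ∈ M with y·U = x·V + Q·W, then ιD·(x·U) − 2(ℓ+1)(n/2 + ℓ − k) • U lies in the subset x·M + Q·M = {x·m + Q·m' : m, m' ∈ M}. (The coefficient 2(ℓ+1)(n/2 + ℓ − k) is nonzero precisely when ℓ ≠ −1 and k ≠ n/2 + ℓ.) -/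

import Mathlib

/-!
Modulo `x·M + Q·M` everything reduces to `U` by moving each operator to the right of `x`
with the (anti)commutation relations. `N`-weights shift by one across `x`, so the factor
`n + 2N - 2` acts on `x • U` as `2ℓ`; `δ • x • U` contributes `F - N - (n + 2)` evaluated
on `U`, and `y • Δ • x • U` reduces to `-2 y • d • U`, which is `-2 (N + F)` on `U` because
`d • y • U = d • (x • V + Q • W)` lies in `x·M + Q·M`.
-/

open scoped Pointwise

/-- The operator `ι(𝔻) = −δ̃(n + 2∇_𝕏 − 2) + ι(𝕏)Δ̃` of Branson–Gover, modelled in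
an abstract associative `ℝ`-algebra. -/
def iotaD {A : Type*} [Ring A] [Algebra ℝ A] (n : ℝ) (δ y Δ N : A) : A :=
  -(δ * (n • (1 : A) + (2 : ℝ) • N - (2 : ℝ) • (1 : A))) + y * Δ

section

variable {R A M : Type*} [CommRing R] [Ring A] [Algebra R A]
  [AddCommGroup M] [Module R M] [Module A M] [IsScalarTower R A M]

theorem smul_smul_eq_sub_smul_smul_of_add_eq {a b c : A} (h : a * b + b * a = c) (m : M) :
    a • b • m = c • m - b • a • m := by
  rw [← h, add_smul, mul_smul, mul_smul, add_sub_cancel_right]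

theorem smul_smul_eq_smul_smul_add_of_sub_eq {a b c : A} (h : a * b - b * a = c) (m : M) :
    a • b • m = b • a • m + c • m := by
  rw [← h, sub_smul, mul_smul, mul_smul, add_sub_cancel]

theorem smul_smul_eq_add_one_smul_of_sub_eq_self {N x : A} {c : R} {U : M}
    (h : N * x - x * N = x) (hU : N • U = c • U) :
    N • x • U = (c + 1) • x • U := by
  rw [smul_smul_eq_smul_smul_add_of_sub_eq h, hU, smul_comm, add_smul, one_smul]

theorem mem_smul_top_sup_smul_top_iff {x Q : A} {m : M} :
    m ∈ (x • ⊤ ⊔ Q • ⊤ : Submodule R M) ↔ ∃ m₁ m₂ : M, m = x • m₁ + Q • m₂ := by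
  simp only [Submodule.mem_sup, Submodule.mem_smul_pointwise_iff_exists, Submodule.mem_top,
    true_and]
  constructor
  · rintro ⟨_, ⟨m₁, rfl⟩, _, ⟨m₂, rfl⟩, rfl⟩
    exact ⟨m₁, m₂, rfl⟩
  · rintro ⟨m₁, m₂, rfl⟩
    exact ⟨_, ⟨m₁, rfl⟩, _, ⟨m₂, rfl⟩, rfl⟩

theorem smul_smodEq_zero_left (x Q : A) (m : M) :
    x • m ≡ 0 [SMOD (x • ⊤ ⊔ Q • ⊤ : Submodule R M)] :=
  SModEq.zero.2 <| Submodule.mem_sup_left <| Submodule.smul_mem_pointwise_smul m x ⊤ trivial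

theorem smul_smodEq_zero_right (x Q : A) (m : M) :
    Q • m ≡ 0 [SMOD (x • ⊤ ⊔ Q • ⊤ : Submodule R M)] :=
  SModEq.zero.2 <| Submodule.mem_sup_right <| Submodule.smul_mem_pointwise_smul m Q ⊤ trivial

variable {d δ x y Δ Q N F : A} {c k s : R} {U V W : M}

theorem y_smul_d_smul_smodEq (h₂ : d * x + x * d = 0)
    (h₄ : Q * d - d * Q = -((2 : R) • x)) (h₇ : d * y + y * d = N + F)
    (hU : N • U = c • U) (hF : F • U = k • U) (hVW : y • U = x • V + Q • W) :
    y • d • U ≡ (c + k) • U [SMOD (x • ⊤ ⊔ Q • ⊤ : Submodule R M)] := by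
  have hdQ : d • Q • W = Q • d • W + (2 : R) • x • W := by
    rw [smul_smul_eq_smul_smul_add_of_sub_eq h₄, neg_smul, smul_assoc, neg_add_cancel_right]
  have hdx : d • x • V = -(x • d • V) := by
    rw [smul_smul_eq_sub_smul_smul_of_add_eq h₂, zero_smul, zero_sub]
  calc y • d • U = (c + k) • U - (-(x • d • V) + (Q • d • W + (2 : R) • x • W)) := by
        rw [smul_smul_eq_sub_smul_smul_of_add_eq ((add_comm _ _).trans h₇), add_smul, hU, hF,
          add_smul, hVW, smul_add, hdx, hdQ]
    _ ≡ (c + k) • U - (-0 + (0 + (2 : R) • 0)) [SMOD (x • ⊤ ⊔ Q • ⊤ : Submodule R M)] := by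
        gcongr
        exacts [smul_smodEq_zero_left x Q _, smul_smodEq_zero_right x Q _,
          smul_smodEq_zero_left x Q _]
    _ = (c + k) • U := by simp

theorem delta_smul_x_smul_smodEq (h₈ : δ * x + x * δ = F - N - s • (1 : A))
    (hU : N • U = c • U) (hF : F • U = k • U) :
    δ • x • U ≡ (k - c - s) • U [SMOD (x • ⊤ ⊔ Q • ⊤ : Submodule R M)] :=
  calc δ • x • U = (k - c - s) • U - x • δ • U := by
        rw [smul_smul_eq_sub_smul_smul_of_add_eq h₈, sub_smul, sub_smul, hF, hU, smul_assoc,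
          one_smul, ← sub_smul, ← sub_smul]
    _ ≡ (k - c - s) • U - 0 [SMOD (x • ⊤ ⊔ Q • ⊤ : Submodule R M)] := by
        gcongr
        exact smul_smodEq_zero_left x Q _
    _ = (k - c - s) • U := sub_zero _

theorem y_smul_Delta_smul_x_smul_smodEq (h₃ : x * y + y * x = Q)
    (h₅ : Δ * x - x * Δ = -((2 : R) • d)) :
    y • Δ • x • U ≡ -(2 : R) • y • d • U [SMOD (x • ⊤ ⊔ Q • ⊤ : Submodule R M)] :=
  calc y • Δ • x • U = Q • Δ • U - x • y • Δ • U + -(2 : R) • y • d • U := by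
        rw [smul_smul_eq_smul_smul_add_of_sub_eq h₅, smul_add,
          smul_smul_eq_sub_smul_smul_of_add_eq ((add_comm _ _).trans h₃), neg_smul, smul_assoc,
          smul_neg, smul_comm y (2 : R), neg_smul]
    _ ≡ 0 - 0 + -(2 : R) • y • d • U [SMOD (x • ⊤ ⊔ Q • ⊤ : Submodule R M)] := by
        gcongr
        exacts [smul_smodEq_zero_right x Q _, smul_smodEq_zero_left x Q _]
    _ = -(2 : R) • y • d • U := by rw [sub_zero, zero_add]

end

section

variable {A M : Type*} [Ring A] [Algebra ℝ A]
  [AddCommGroup M] [Module ℝ M] [Module A M] [IsScalarTower ℝ A M]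
  {n ℓ k : ℝ} {d δ x y Δ Q N F : A} {U V W : M}

theorem iotaD_smul_x_smul_eq (h₆ : N * x - x * N = x) (hU : N • U = (ℓ - n / 2) • U) :
    iotaD n δ y Δ N • x • U = -(2 * ℓ) • δ • x • U + y • Δ • x • U := by
  have hweight : (n • (1 : A) + (2 : ℝ) • N - (2 : ℝ) • (1 : A)) • x • U = (2 * ℓ) • x • U := by
    rw [sub_smul, add_smul, smul_assoc, smul_assoc, smul_assoc, one_smul,
      smul_smul_eq_add_one_smul_of_sub_eq_self h₆ hU, smul_smul, ← add_smul, ← sub_smul]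
    congr 1; ring
  rw [iotaD, add_smul, neg_smul, mul_smul, mul_smul, hweight, smul_comm, neg_smul]

theorem iotaD_smul_x_smul_smodEq (h₂ : d * x + x * d = 0) (h₃ : x * y + y * x = Q)
    (h₄ : Q * d - d * Q = -((2 : ℝ) • x)) (h₅ : Δ * x - x * Δ = -((2 : ℝ) • d))
    (h₆ : N * x - x * N = x) (h₇ : d * y + y * d = N + F)
    (h₈ : δ * x + x * δ = F - N - (n + 2) • (1 : A))
    (hU : N • U = (ℓ - n / 2) • U) (hF : F • U = k • U) (hVW : y • U = x • V + Q • W) :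
    iotaD n δ y Δ N • x • U ≡ (2 * (ℓ + 1) * (n / 2 + ℓ - k)) • U
      [SMOD (x • ⊤ ⊔ Q • ⊤ : Submodule ℝ M)] :=
  calc iotaD n δ y Δ N • x • U = -(2 * ℓ) • δ • x • U + y • Δ • x • U :=
        iotaD_smul_x_smul_eq h₆ hU
    _ ≡ -(2 * ℓ) • (k - (ℓ - n / 2) - (n + 2)) • U + -(2 : ℝ) • (ℓ - n / 2 + k) • U
        [SMOD (x • ⊤ ⊔ Q • ⊤ : Submodule ℝ M)] :=
        ((delta_smul_x_smul_smodEq h₈ hU hF).smul _).add <|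
          (y_smul_Delta_smul_x_smul_smodEq h₃ h₅).trans <|
            (y_smul_d_smul_smodEq h₂ h₄ h₇ hU hF hVW).smul _
    _ = (2 * (ℓ + 1) * (n / 2 + ℓ - k)) • U := by module

end

theorem stmt_17_general
    {A : Type*} [Ring A] [Algebra ℝ A]
    (n : ℝ) (d δ x y Δ Q N F : A)
    (h₂ : d * x + x * d = 0)
    (h₃ : x * y + y * x = Q)
    (h₄ : Q * d - d * Q = -((2 : ℝ) • x))
    (h₅ : Δ * x - x * Δ = -((2 : ℝ) • d))
    (h₆ : N * x - x * N = x)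
    (h₇ : d * y + y * d = N + F)
    (h₈ : δ * x + x * δ = F - N - (n + 2) • (1 : A))
    (M : Type*) [AddCommGroup M] [Module ℝ M] [Module A M] [IsScalarTower ℝ A M]
    (ℓ k : ℝ) (U : M)
    (hU : N • U = (ℓ - n / 2) • U) (hF : F • U = k • U)
    (V W : M) (hVW : y • U = x • V + Q • W) :
    (∃ m m' : M,
      iotaD n δ y Δ N • (x • U) - (2 * (ℓ + 1) * (n / 2 + ℓ - k)) • U =
        x • m + Q • m') ∧
    (2 * (ℓ + 1) * (n / 2 + ℓ - k) ≠ 0 ↔ (ℓ ≠ -1 ∧ k ≠ n / 2 + ℓ)) := by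
  refine ⟨mem_smul_top_sup_smul_top_iff.1 <| SModEq.sub_mem.1 <|
    iotaD_smul_x_smul_smodEq h₂ h₃ h₄ h₅ h₆ h₇ h₈ hU hF hVW, ?_⟩
  simp only [ne_eq, mul_eq_zero, two_ne_zero, false_or, not_or, add_eq_zero_iff_eq_neg,
    sub_eq_zero, eq_comm (a := k)]

/-- Algebraic content of Proposition 3.10(ii) of Branson–Gover: for `U` an
ambient lift of a weighted `k`-form (so `ι(𝕏)U = ε(𝕏)V + QW`), the element
`ι(𝔻) ε(𝕏) U − 2(ℓ+1)(n/2 + ℓ − k) U` lies in `ε(𝕏)·M + Q·M`; the coefficient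
`2(ℓ+1)(n/2 + ℓ − k)` is nonzero precisely when `ℓ ≠ −1` and `k ≠ n/2 + ℓ`. -/
theorem stmt_17
    {A : Type*} [Ring A] [Algebra ℝ A]
    (n : ℝ) (d δ x y Δ Q N F : A)
    (h₁ : x * x = 0)
    (h₂ : d * x + x * d = 0)
    (h₃ : x * y + y * x = Q)
    (h₄ : Q * d - d * Q = -((2 : ℝ) • x))
    (h₅ : Δ * x - x * Δ = -((2 : ℝ) • d))
    (h₆ : N * x - x * N = x)
    (h₇ : d * y + y * d = N + F)
    (h₈ : δ * x + x * δ = F - N - (n + 2) • (1 : A))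
    (M : Type*) [AddCommGroup M] [Module ℝ M] [Module A M] [IsScalarTower ℝ A M]
    (ℓ k : ℝ) (U : M)
    (hU : N • U = (ℓ - n / 2) • U) (hF : F • U = k • U)
    (V W : M) (hVW : y • U = x • V + Q • W) :
    (∃ m m' : M,
      iotaD n δ y Δ N • (x • U) - (2 * (ℓ + 1) * (n / 2 + ℓ - k)) • U =
        x • m + Q • m') ∧
    (2 * (ℓ + 1) * (n / 2 + ℓ - k) ≠ 0 ↔ (ℓ ≠ -1 ∧ k ≠ n / 2 + ℓ)) :=
  stmt_17_general n d δ x y Δ Q N F h₂ h₃ h₄ h₅ h₆ h₇ h₈ M ℓ k U hU hF V W hVW
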